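/- arXiv:2003.13125 — 2 statements merged into one kernel-verified Lean document; each statement's English description precedes it below -/
import Mathlib

section
/- Let l ≥ 1, q ≥ 0 and 0 ≤ r < l be natural numbers. Define a sequence N_1, …, N_l by N_l = q·l + r and, for 1 ≤ k ≤ l−1, N_k = ⌊ k·N_{k+1} / (k+1) ⌋. Then N_k = q·k + r + k − l for every k with l − r ≤ k ≤ l, and N_k = q·k for every k with 1 ≤ k ≤ l − r. -/
/-!
Writing `N_{k+1} = q(k+1) + t` with `t ≤ k + 1`, one has `k N_{k+1} = (k+1) q k + k t` and
`k t = (k+1)(t-1) + (k+1-t)`, so the floor division lowers the excess `t` over `q(k+1)` by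
exactly one (or keeps it at `0`). Starting from the excess `r` at `k = l`, the excess at `k` is
therefore `r + k - l` truncated at `0`.
-/

namespace Nat

theorem mul_div_succ_of_le {k t : ℕ} (ht : t ≤ k + 1) : k * t / (k + 1) = t - 1 := by
  rcases Nat.eq_zero_or_pos t with rfl | ht0
  · simp
  · have hkt : k * t = (k + 1) * (t - 1) + (k + 1 - t) := by
      obtain ⟨s, rfl⟩ : ∃ s, t = s + 1 := ⟨t - 1, by omega⟩
      obtain ⟨u, rfl⟩ : ∃ u, k = s + u := ⟨k - s, by omega⟩
      simp only [Nat.add_sub_cancel, show s + u + 1 - (s + 1) = u by omega]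
      ring
    rw [hkt, Nat.mul_add_div (succ_pos k), Nat.div_eq_of_lt (by omega), add_zero]

theorem mul_add_div_succ_of_le {k t : ℕ} (q : ℕ) (ht : t ≤ k + 1) :
    k * (q * (k + 1) + t) / (k + 1) = q * k + (t - 1) := by
  rw [mul_add, show k * (q * (k + 1)) = (k + 1) * (q * k) by ring,
    Nat.mul_add_div (succ_pos k), mul_div_succ_of_le ht]

end Nat

theorem floor_recursion_closed_form {l q r : ℕ} (hr : r ≤ l) {N : ℕ → ℕ}
    (hNl : N l = q * l + r)
    (hrec : ∀ k, 1 ≤ k → k ≤ l - 1 → N k = k * N (k + 1) / (k + 1)) {k : ℕ} (hk : 1 ≤ k)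
    (hkl : k ≤ l) : N k = q * k + (r + k - l) := by
  induction hkl using Nat.decreasingInduction with
  | self => rw [hNl, Nat.add_sub_cancel]
  | of_succ k hkl ih =>
    rw [hrec k hk (by omega), ih (by omega),
      Nat.mul_add_div_succ_of_le q (by omega : r + (k + 1) - l ≤ k + 1)]
    congr 1
    omega

theorem stmt2_general (l q r : ℕ) (hr : r < l) (N : ℕ → ℕ)
    (hNl : N l = q * l + r)
    (hrec : ∀ k, 1 ≤ k → k ≤ l - 1 → N k = k * N (k + 1) / (k + 1)) :
    (∀ k, l - r ≤ k → k ≤ l → N k = q * k + r + k - l) ∧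
      (∀ k, 1 ≤ k → k ≤ l - r → N k = q * k) := by
  constructor
  · intro k hrk hkl
    have := floor_recursion_closed_form hr.le hNl hrec (by omega : 1 ≤ k) hkl
    omega
  · intro k hk hkr
    have := floor_recursion_closed_form hr.le hNl hrec hk (by omega : k ≤ l)
    omega

/-- Closed form for the recursively defined sequence `N_l = q·l + r`,
`N_k = ⌊k·N_{k+1}/(k+1)⌋`: one has `N_k = q·k + r + k − l` for `l − r ≤ k ≤ l`
and `N_k = q·k` for `1 ≤ k ≤ l − r`.  Here `/` is natural (floor) division. -/
theorem stmt2 (l q r : ℕ) (hl : 1 ≤ l) (hr : r < l) (N : ℕ → ℕ)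
    (hNl : N l = q * l + r)
    (hrec : ∀ k, 1 ≤ k → k ≤ l - 1 → N k = k * N (k + 1) / (k + 1)) :
    (∀ k, l - r ≤ k → k ≤ l → N k = q * k + r + k - l) ∧
      (∀ k, 1 ≤ k → k ≤ l - r → N k = q * k) :=
  stmt2_general l q r hr N hNl hrec
end

section
/- Let l ≥ 1, q ≥ 0 and 0 ≤ r < l be natural numbers, and define N_1, …, N_l by N_l = q·l + r and N_k = ⌊ k·N_{k+1} / (k+1) ⌋ for 1 ≤ k ≤ l−1. Then 2·∑_{k=1}^{l−1} N_k = (l−1)·l·q + (r−1)·r. -/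
/-!
Descending from `N l = q * l + r`, one finds `N k = q * k + (r - (l - k))`, since
`k * (q * (k + 1) + s) / (k + 1) = q * k + (s - 1)` whenever `s ≤ k`: the excess over `q * k`
drops by one at each step until it vanishes. Summing the two parts gives `q * (l - 1) * l / 2`
and `(r - 1) * r / 2`.
-/

open Finset

lemma Nat.mul_div_succ_of_le_s5 {k s : ℕ} (hs : s ≤ k) : k * s / (k + 1) = s - 1 := by
  obtain rfl | ⟨t, rfl⟩ : s = 0 ∨ ∃ t, s = t + 1 := by cases s <;> simp
  · simp
  obtain ⟨d, rfl⟩ : ∃ d, k = t + 1 + d := ⟨k - (t + 1), by omega⟩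
  have hsplit : (t + 1 + d) * (t + 1) = (t + 1 + d + 1) * t + (d + 1) := by ring
  rw [hsplit, Nat.mul_add_div (by omega), Nat.div_eq_of_lt (by omega), Nat.add_zero,
    Nat.add_sub_cancel]

lemma Nat.mul_add_div_succ_of_le_s5 (q : ℕ) {k s : ℕ} (hs : s ≤ k) :
    k * (q * (k + 1) + s) / (k + 1) = q * k + (s - 1) := by
  rw [show k * (q * (k + 1) + s) = k * s + (k + 1) * (q * k) by ring,
    Nat.add_mul_div_left _ _ (Nat.succ_pos k), Nat.mul_div_succ_of_le_s5 hs, Nat.add_comm]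

lemma eq_mul_add_tsub_of_floor_recursion {l q r : ℕ} (hr : r < l) {N : ℕ → ℕ}
    (hNl : N l = q * l + r)
    (hrec : ∀ k, 1 ≤ k → k ≤ l - 1 → N k = k * N (k + 1) / (k + 1)) :
    ∀ k, 1 ≤ k → k ≤ l → N k = q * k + (r - (l - k)) := by
  intro k hk hkl
  induction hkl using Nat.decreasingInduction with
  | self => simpa using hNl
  | of_succ k hkl ih =>
    rw [hrec k hk (by omega), ih (by omega),
      Nat.mul_add_div_succ_of_le_s5 q (by omega : r - (l - (k + 1)) ≤ k)]
    congr 1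
    omega

lemma two_mul_sum_Icc_mul_add_tsub (q n : ℕ) :
    ∀ r ≤ n + 1,
      2 * ∑ k ∈ Icc 1 n, (q * k + (r - (n + 1 - k))) = n * (n + 1) * q + (r - 1) * r := by
  induction n with
  | zero =>
    intro r hr
    interval_cases r <;> simp
  | succ n ih =>
    intro r hr
    have hshift : ∀ k ∈ Icc 1 n,
        q * k + (r - (n + 1 + 1 - k)) = q * k + (r - 1 - (n + 1 - k)) := by
      intro k hk
      rw [mem_Icc] at hk
      omega
    rw [sum_Icc_succ_top (by omega), sum_congr rfl hshift, mul_add, ih (r - 1) (by omega),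
      show n + 1 + 1 - (n + 1) = 1 by omega]
    rcases Nat.lt_or_ge r 2 with hr₁ | hr₂
    · interval_cases r <;> simp <;> ring
    · obtain ⟨t, rfl⟩ : ∃ t, r = t + 2 := ⟨r - 2, by omega⟩
      simp only [Nat.add_sub_cancel, show t + 2 - 1 = t + 1 by omega]
      ring

theorem stmt5_general (l q r : ℕ) (hr : r < l) (N : ℕ → ℕ)
    (hNl : N l = q * l + r)
    (hrec : ∀ k, 1 ≤ k → k ≤ l - 1 → N k = k * N (k + 1) / (k + 1)) :
    2 * ∑ k ∈ Finset.Icc 1 (l - 1), N k = (l - 1) * l * q + (r - 1) * r := by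
  obtain ⟨n, rfl⟩ : ∃ n, l = n + 1 := ⟨l - 1, by omega⟩
  have hclosed := eq_mul_add_tsub_of_floor_recursion hr hNl hrec
  rw [Nat.add_sub_cancel, sum_congr rfl fun k hk ↦ hclosed k (mem_Icc.1 hk).1 (by grind)]
  exact two_mul_sum_Icc_mul_add_tsub q n r hr.le

/-- Closed-form evaluation `2·∑_{k=1}^{l−1} N_k = (l−1)·l·q + (r−1)·r` for the recursively
defined sequence `N_l = q·l + r`, `N_k = ⌊k·N_{k+1}/(k+1)⌋`.  Here `/` is natural (floor)
division; for `r = 0` the term `(r−1)·r` is `0` (as it is with truncated subtraction). -/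
theorem stmt5 (l q r : ℕ) (hl : 1 ≤ l) (hr : r < l) (N : ℕ → ℕ)
    (hNl : N l = q * l + r)
    (hrec : ∀ k, 1 ≤ k → k ≤ l - 1 → N k = k * N (k + 1) / (k + 1)) :
    2 * ∑ k ∈ Finset.Icc 1 (l - 1), N k = (l - 1) * l * q + (r - 1) * r :=
  stmt5_general l q r hr N hNl hrec
end
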